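/- Assume moreover ρ < 1/2. For every natural number k, if ρ^{k+1}·(1/2 − ρ) ≤ ε < ρ^k·(1/2 − ρ), then the closed ε-neighborhood S_ε has exactly 3^{k+1} connected components. -/

import Mathlib

open Metric Set Bornology

/-- The vertices of the unit equilateral triangle. -/
noncomputable def v0 : EuclideanSpace ℝ (Fin 2) :=
  (WithLp.equiv 2 (Fin 2 → ℝ)).symm ![0, 0]

noncomputable def v1 : EuclideanSpace ℝ (Fin 2) :=
  (WithLp.equiv 2 (Fin 2 → ℝ)).symm ![1, 0]

noncomputable def v2 : EuclideanSpace ℝ (Fin 2) :=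
  (WithLp.equiv 2 (Fin 2 → ℝ)).symm ![1 / 2, Real.sqrt 3 / 2]

/-- The homothety with center `v0` (resp. `v1`, `v2`) and ratio `ρ`. -/
noncomputable def f0 (ρ : ℝ) (x : EuclideanSpace ℝ (Fin 2)) : EuclideanSpace ℝ (Fin 2) :=
  v0 + ρ • (x - v0)

noncomputable def f1 (ρ : ℝ) (x : EuclideanSpace ℝ (Fin 2)) : EuclideanSpace ℝ (Fin 2) :=
  v1 + ρ • (x - v1)

noncomputable def f2 (ρ : ℝ) (x : EuclideanSpace ℝ (Fin 2)) : EuclideanSpace ℝ (Fin 2) :=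
  v2 + ρ • (x - v2)

/-- The union of the images of a set under the three homotheties. -/
noncomputable def sierpPhi (ρ : ℝ) (X : Set (EuclideanSpace ℝ (Fin 2))) :
    Set (EuclideanSpace ℝ (Fin 2)) :=
  f0 ρ '' X ∪ f1 ρ '' X ∪ f2 ρ '' X

/-- The filled equilateral triangle. -/
noncomputable def sierpT : Set (EuclideanSpace ℝ (Fin 2)) :=
  convexHull ℝ {v0, v1, v2}

/-- The generalized Sierpinski triangle with contraction ratio `ρ`. -/
noncomputable def sierpinski (ρ : ℝ) : Set (EuclideanSpace ℝ (Fin 2)) :=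
  ⋂ k : ℕ, (sierpPhi ρ)^[k] sierpT

/-!
Since `S = f₀ S ∪ f₁ S ∪ f₂ S` and each `fᵢ` is a homothety of ratio `ρ`, the thickening satisfies
`S_ε = f₀(S_{ε/ρ}) ∪ f₁(S_{ε/ρ}) ∪ f₂(S_{ε/ρ})`. The piece `fᵢ(S_{ε/ρ}) = (fᵢ S)_ε` lies in the
closed ball of radius `ρ + ε` about `vᵢ`, and the vertices are at mutual distance `1`, so for
`ε < 1/2 − ρ` the three pieces are disjoint closed sets, each homeomorphic to `S_{ε/ρ}`: the number
of components triples. After `k + 1` such steps the radius lies in `[1/2 − ρ, (1/2 − ρ)/ρ)`, where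
the thickening is connected. Indeed, for `δ ≥ 1/2 − ρ` the pieces `fᵢ(S_{δ/ρ})` are connected by
induction on the number of steps needed to reach a radius `≥ 1` (where `S_δ` is a union of balls
through `v₀`), and any two of them share the midpoint of the corresponding side of the triangle.
-/

open AffineMap

section Components

variable {α β : Type*} [TopologicalSpace α] [TopologicalSpace β] {A B s : Set α}

def componentsIn (s : Set α) : Set (Set α) :=
  connectedComponentIn s '' s

theorem connectedComponentIn_union_of_isClosed (hA : IsClosed A) (hB : IsClosed B)
    (hAB : Disjoint A B) {x : α} (hx : x ∈ A) :
    connectedComponentIn (A ∪ B) x = connectedComponentIn A x := by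
  refine subset_antisymm ?_ (connectedComponentIn_mono _ subset_union_left)
  have hC : IsPreconnected (connectedComponentIn (A ∪ B) x) := isPreconnected_connectedComponentIn
  have hxC : x ∈ connectedComponentIn (A ∪ B) x := mem_connectedComponentIn (.inl hx)
  refine hC.subset_connectedComponentIn hxC ?_
  rcases isPreconnected_iff_subset_of_disjoint_closed.1 hC A B hA hB
      (connectedComponentIn_subset _ _) (by rw [hAB.inter_eq, inter_empty]) with hCA | hCB
  · exact hCA
  · exact absurd (hCB hxC) (hAB.notMem_of_mem_left hx)

theorem componentsIn_union_of_isClosed (hA : IsClosed A) (hB : IsClosed B) (hAB : Disjoint A B) :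
    componentsIn (A ∪ B) = componentsIn A ∪ componentsIn B := by
  rw [componentsIn, image_union]
  congr 1
  · exact image_congr fun x hx ↦ connectedComponentIn_union_of_isClosed hA hB hAB hx
  · rw [union_comm]
    exact image_congr fun x hx ↦ connectedComponentIn_union_of_isClosed hB hA hAB.symm hx

theorem Disjoint.componentsIn (hAB : Disjoint A B) :
    Disjoint (componentsIn A) (componentsIn B) := by
  rw [disjoint_left]
  rintro _ ⟨x, hx, rfl⟩ ⟨y, -, hyx⟩
  exact hAB.notMem_of_mem_left hx
    (connectedComponentIn_subset B y (hyx ▸ mem_connectedComponentIn hx))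

theorem encard_componentsIn_union (hA : IsClosed A) (hB : IsClosed B) (hAB : Disjoint A B) :
    (componentsIn (A ∪ B)).encard = (componentsIn A).encard + (componentsIn B).encard := by
  rw [componentsIn_union_of_isClosed hA hB hAB, encard_union_eq hAB.componentsIn]

theorem Homeomorph.encard_componentsIn_image (e : α ≃ₜ β) (s : Set α) :
    (componentsIn (e '' s)).encard = (componentsIn s).encard := by
  have : componentsIn (e '' s) = (e '' ·) '' componentsIn s := by
    simp only [componentsIn, image_image]
    exact image_congr fun x hx ↦ (e.image_connectedComponentIn hx).symm
  rw [this, (image_injective.2 e.injective).injOn.encard_image]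

theorem IsPreconnected.componentsIn_eq (h : IsPreconnected s) (hs : s.Nonempty) :
    componentsIn s = {s} := by
  rw [componentsIn, image_congr fun x hx ↦ h.connectedComponentIn hx]
  exact hs.image_const s

end Components

section Homothety

variable {E : Type*} [NormedAddCommGroup E] [NormedSpace ℝ E] {c : E} {r δ : ℝ} {s : Set E}

noncomputable def homothetyHomeomorph (c : E) {r : ℝ} (hr : r ≠ 0) : E ≃ₜ E where
  toFun := homothety c r
  invFun := homothety c r⁻¹
  left_inv x := by simp [← homothety_mul_apply, hr]
  right_inv x := by simp [← homothety_mul_apply, hr]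
  continuous_toFun := homothety_continuous c r
  continuous_invFun := homothety_continuous c r⁻¹

theorem encard_componentsIn_homothety_image (hr : r ≠ 0) (s : Set E) :
    (componentsIn (homothety c r '' s)).encard = (componentsIn s).encard :=
  (homothetyHomeomorph c hr).encard_componentsIn_image s

theorem homothety_bijective (hr : r ≠ 0) : Function.Bijective (homothety c r) :=
  (homothetyHomeomorph c hr).bijective

theorem infEDist_homothety_image (hr : 0 < r) (x : E) (s : Set E) :
    infEDist (homothety c r x) (homothety c r '' s) = ENNReal.ofReal r * infEDist x s := by
  have hedist : ∀ y, edist (homothety c r x) (homothety c r y) = ENNReal.ofReal r * edist x y :=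
    fun y ↦ by
      simp [homothety_apply, edist_smul₀, ENNReal.smul_def, ← enorm_eq_nnnorm,
        Real.enorm_of_nonneg hr.le]
  simp only [infEDist, iInf_image, hedist,
    ENNReal.mul_iInf_of_ne (ENNReal.ofReal_pos.2 hr).ne' ENNReal.ofReal_ne_top]

theorem cthickening_homothety_image (hr : 0 < r) (δ : ℝ) (s : Set E) :
    cthickening δ (homothety c r '' s) = homothety c r '' cthickening (δ / r) s := by
  ext y
  obtain ⟨x, rfl⟩ := (homothety_bijective (c := c) hr.ne').surjective y
  rw [(homothety_bijective hr.ne').injective.mem_set_image, mem_cthickening_iff,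
    mem_cthickening_iff, infEDist_homothety_image hr, ENNReal.ofReal_div_of_pos hr,
    ENNReal.le_div_iff_mul_le (.inl (ENNReal.ofReal_pos.2 hr).ne') (.inl ENNReal.ofReal_ne_top),
    mul_comm]

theorem cthickening_homothety_image_subset_closedBall {R ε : ℝ} (hr : 0 ≤ r) (hε : 0 ≤ ε)
    (hR : 0 ≤ R) (hs : s ⊆ closedBall c R) :
    cthickening ε (homothety c r '' s) ⊆ closedBall c (ε + r * R) := by
  rw [← cthickening_closedBall hε (mul_nonneg hr hR)]
  refine cthickening_subset_of_subset _ ?_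
  rintro _ ⟨x, hx, rfl⟩
  rw [mem_closedBall, dist_homothety_center, Real.norm_of_nonneg hr]
  exact mul_le_mul_of_nonneg_left (mem_closedBall'.1 (hs hx)) hr

theorem midpoint_mem_cthickening_homothety_image {a b : E} (hb : b ∈ s)
    (h : |1 / 2 - r| * dist a b ≤ δ) : midpoint ℝ a b ∈ cthickening δ (homothety a r '' s) := by
  refine mem_cthickening_of_dist_le _ _ _ _ (mem_image_of_mem _ hb) ?_
  rwa [← homothety_one_half, homothety_eq_lineMap, homothety_eq_lineMap, dist_lineMap_lineMap,
    Real.dist_eq]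

theorem IsCompact.isPreconnected_cthickening_of_subset_closedBall {K : Set E} (hK : IsCompact K)
    (hδ : 0 ≤ δ) (hKc : K ⊆ closedBall c δ) : IsPreconnected (cthickening δ K) := by
  rw [hK.cthickening_eq_biUnion_closedBall hδ, ← sUnion_image]
  refine isPreconnected_sUnion c _ ?_ ?_ <;> rintro _ ⟨x, hx, rfl⟩
  · exact mem_closedBall_comm.1 (hKc hx)
  · exact (convex_closedBall x δ).isPreconnected

end Homothety

section Sierpinski

variable {ρ δ ε : ℝ}

theorem sierpPhi_eq (ρ : ℝ) (X : Set (EuclideanSpace ℝ (Fin 2))) :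
    sierpPhi ρ X = homothety v0 ρ '' X ∪ homothety v1 ρ '' X ∪ homothety v2 ρ '' X := by
  have hf : ∀ v : EuclideanSpace ℝ (Fin 2), (fun x ↦ v + ρ • (x - v)) = homothety v ρ :=
    fun v ↦ funext fun _ ↦ add_comm _ _
  rw [sierpPhi, show f0 ρ = _ from hf v0, show f1 ρ = _ from hf v1, show f2 ρ = _ from hf v2]

theorem dist_v0_v1 : dist v0 v1 = 1 := by
  simp [EuclideanSpace.dist_eq, v0, v1]

theorem dist_v0_v2 : dist v0 v2 = 1 := by
  simp [EuclideanSpace.dist_eq, v0, v2, Real.sqrt_eq_one, div_pow]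
  norm_num

theorem dist_v1_v2 : dist v1 v2 = 1 := by
  simp [EuclideanSpace.dist_eq, v1, v2, Real.sqrt_eq_one, div_pow, Real.dist_eq]
  norm_num

theorem sierpT_subset_closedBall {v : EuclideanSpace ℝ (Fin 2)} (hv : v ∈ ({v0, v1, v2} : Set _)) :
    sierpT ⊆ closedBall v 1 := by
  refine convexHull_min ?_ (convex_closedBall v 1)
  have := dist_v0_v1
  have := dist_v0_v2
  have := dist_v1_v2
  rcases hv with rfl | rfl | rfl <;> rintro w (rfl | rfl | rfl) <;> simp [dist_comm, *]

theorem isCompact_iterate_sierpPhi (ρ : ℝ) (k : ℕ) : IsCompact ((sierpPhi ρ)^[k] sierpT) := by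
  induction k with
  | zero => exact (toFinite _).isCompact_convexHull (𝕜 := ℝ)
  | succ k ih =>
    rw [Function.iterate_succ_apply', sierpPhi_eq]
    exact ((ih.image (homothety_continuous _ _)).union (ih.image (homothety_continuous _ _))).union
      (ih.image (homothety_continuous _ _))

theorem isCompact_sierpinski (ρ : ℝ) : IsCompact (sierpinski ρ) :=
  (isCompact_iterate_sierpPhi ρ 0).of_isClosed_subset
    (isClosed_iInter fun k ↦ (isCompact_iterate_sierpPhi ρ k).isClosed) (iInter_subset _ 0)

theorem sierpinski_subset_closedBall {v : EuclideanSpace ℝ (Fin 2)}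
    (hv : v ∈ ({v0, v1, v2} : Set _)) : sierpinski ρ ⊆ closedBall v 1 :=
  (iInter_subset _ 0).trans (sierpT_subset_closedBall hv)

theorem vertex_mem_sierpinski {v : EuclideanSpace ℝ (Fin 2)} (hv : v ∈ ({v0, v1, v2} : Set _)) :
    v ∈ sierpinski ρ := by
  refine mem_iInter.2 fun k ↦ ?_
  induction k with
  | zero => exact subset_convexHull ℝ _ hv
  | succ k ih =>
    rw [Function.iterate_succ_apply', sierpPhi_eq]
    rcases hv with rfl | rfl | rfl
    exacts [.inl (.inl ⟨_, ih, homothety_apply_same _ _⟩),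
      .inl (.inr ⟨_, ih, homothety_apply_same _ _⟩), .inr ⟨_, ih, homothety_apply_same _ _⟩]

theorem sierpPhi_mono (ρ : ℝ) : Monotone (sierpPhi ρ) := fun _ _ h ↦ by
  simp only [sierpPhi_eq]
  gcongr

theorem sierpPhi_sierpT_subset (hρ0 : 0 ≤ ρ) (hρ1 : ρ ≤ 1) : sierpPhi ρ sierpT ⊆ sierpT := by
  have hT : ∀ v ∈ ({v0, v1, v2} : Set _), homothety v ρ '' sierpT ⊆ sierpT := by
    rintro v hv _ ⟨x, hx, rfl⟩
    rw [homothety_eq_lineMap]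
    exact (convex_convexHull ℝ _).lineMap_mem (subset_convexHull ℝ _ hv) hx ⟨hρ0, hρ1⟩
  rw [sierpPhi_eq]
  exact union_subset (union_subset (hT _ (by simp)) (hT _ (by simp))) (hT _ (by simp))

theorem antitone_iterate_sierpPhi (hρ0 : 0 ≤ ρ) (hρ1 : ρ ≤ 1) :
    Antitone fun k ↦ (sierpPhi ρ)^[k] sierpT :=
  antitone_nat_of_succ_le fun k ↦ by
    rw [Function.iterate_succ_apply]
    exact ((sierpPhi_mono ρ).iterate k) (sierpPhi_sierpT_subset hρ0 hρ1)

theorem sierpPhi_sierpinski (hρ0 : 0 < ρ) (hρ1 : ρ ≤ 1) :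
    sierpPhi ρ (sierpinski ρ) = sierpinski ρ := by
  have hA := antitone_iterate_sierpPhi hρ0.le hρ1
  have himage : ∀ v, Antitone fun k ↦ homothety v ρ '' (sierpPhi ρ)^[k] sierpT :=
    fun v ↦ monotone_image.comp_antitone hA
  rw [sierpinski, sierpPhi_eq, image_iInter (homothety_bijective hρ0.ne'),
    image_iInter (homothety_bijective hρ0.ne'), image_iInter (homothety_bijective hρ0.ne'),
    ← iInter_union_of_antitone (himage v0) (himage v1),
    ← iInter_union_of_antitone ((himage v0).union (himage v1)) (himage v2), ← hA.iInter_nat_add 1]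
  simp only [Function.iterate_succ_apply', sierpPhi_eq]

theorem cthickening_sierpinski (hρ0 : 0 < ρ) (hρ1 : ρ ≤ 1) (δ : ℝ) :
    cthickening δ (sierpinski ρ) = cthickening δ (homothety v0 ρ '' sierpinski ρ) ∪
      cthickening δ (homothety v1 ρ '' sierpinski ρ) ∪
      cthickening δ (homothety v2 ρ '' sierpinski ρ) := by
  conv_lhs => rw [← sierpPhi_sierpinski hρ0 hρ1, sierpPhi_eq]
  rw [cthickening_union, cthickening_union]

theorem disjoint_cthickening_homothety_image_sierpinski {v w : EuclideanSpace ℝ (Fin 2)}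
    (hv : v ∈ ({v0, v1, v2} : Set _)) (hw : w ∈ ({v0, v1, v2} : Set _)) (hvw : dist v w = 1)
    (hρ0 : 0 ≤ ρ) (hε0 : 0 ≤ ε) (hε : ε < 1 / 2 - ρ) :
    Disjoint (cthickening ε (homothety v ρ '' sierpinski ρ))
      (cthickening ε (homothety w ρ '' sierpinski ρ)) :=
  (closedBall_disjoint_closedBall (by rw [hvw]; linarith)).mono
    (cthickening_homothety_image_subset_closedBall hρ0 hε0 zero_le_one
      (sierpinski_subset_closedBall hv))
    (cthickening_homothety_image_subset_closedBall hρ0 hε0 zero_le_one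
      (sierpinski_subset_closedBall hw))

theorem IsPreconnected.cthickening_sierpinski_of_div (hρ0 : 0 < ρ) (hρ : ρ ≤ 1 / 2)
    (hδ : 1 / 2 - ρ ≤ δ) (hY : IsPreconnected (cthickening (δ / ρ) (sierpinski ρ))) :
    IsPreconnected (cthickening δ (sierpinski ρ)) := by
  have piece : ∀ v, IsPreconnected (cthickening δ (homothety v ρ '' sierpinski ρ)) := fun v ↦ by
    rw [cthickening_homothety_image hρ0]
    exact hY.image _ (homothety_continuous v ρ).continuousOn
  have mid : ∀ {a b}, b ∈ ({v0, v1, v2} : Set _) → dist a b = 1 →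
      midpoint ℝ a b ∈ cthickening δ (homothety a ρ '' sierpinski ρ) := fun hb hab ↦
    midpoint_mem_cthickening_homothety_image (vertex_mem_sierpinski hb)
      (by rw [hab, mul_one, abs_of_nonneg (by linarith)]; linarith)
  rw [cthickening_sierpinski hρ0 (by linarith)]
  refine .union (midpoint ℝ v0 v2) (.inl (mid (by simp) dist_v0_v2)) ?_
    (.union (midpoint ℝ v0 v1) (mid (by simp) dist_v0_v1) ?_ (piece v0) (piece v1)) (piece v2)
  · rw [midpoint_comm]
    exact mid (by simp) (dist_comm v0 v2 ▸ dist_v0_v2)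
  · rw [midpoint_comm]
    exact mid (by simp) (dist_comm v0 v1 ▸ dist_v0_v1)

theorem isPreconnected_cthickening_sierpinski (hρ0 : 0 < ρ) (hρ : ρ < 1 / 2)
    (hδ : 1 / 2 - ρ ≤ δ) : IsPreconnected (cthickening δ (sierpinski ρ)) := by
  obtain ⟨n, hn⟩ := exists_pow_lt_of_lt_one (by linarith : 0 < δ) (by linarith : ρ < 1)
  induction n generalizing δ with
  | zero =>
    refine (isCompact_sierpinski ρ).isPreconnected_cthickening_of_subset_closedBall (c := v0)
      (by linarith) ((sierpinski_subset_closedBall (v := v0) (by simp)).trans ?_)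
    exact closedBall_subset_closedBall (by simpa using hn.le)
  | succ n ih =>
    refine .cthickening_sierpinski_of_div hρ0 hρ.le hδ (ih ?_ ?_)
    · rw [le_div_iff₀ hρ0]
      nlinarith
    · rwa [lt_div_iff₀ hρ0, ← pow_succ]

theorem encard_componentsIn_cthickening_sierpinski_eq_three_mul (hρ0 : 0 < ρ) (hε0 : 0 ≤ ε)
    (hε : ε < 1 / 2 - ρ) :
    (componentsIn (cthickening ε (sierpinski ρ))).encard =
      3 * (componentsIn (cthickening (ε / ρ) (sierpinski ρ))).encard := by
  have hdisj := fun {v w} hv hw hvw ↦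
    disjoint_cthickening_homothety_image_sierpinski (v := v) (w := w) hv hw hvw hρ0.le hε0 hε
  rw [cthickening_sierpinski hρ0 (by linarith),
    encard_componentsIn_union (isClosed_cthickening.union isClosed_cthickening) isClosed_cthickening
      (disjoint_union_left.2 ⟨hdisj (by simp) (by simp) dist_v0_v2,
        hdisj (by simp) (by simp) dist_v1_v2⟩),
    encard_componentsIn_union isClosed_cthickening isClosed_cthickening
      (hdisj (by simp) (by simp) dist_v0_v1)]
  simp only [cthickening_homothety_image hρ0, encard_componentsIn_homothety_image hρ0.ne']
  ring

theorem encard_componentsIn_cthickening_sierpinski (hρ0 : 0 < ρ) (hρ : ρ < 1 / 2) (k : ℕ)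
    (hε1 : ρ ^ (k + 1) * (1 / 2 - ρ) ≤ ε) (hε2 : ε < ρ ^ k * (1 / 2 - ρ)) :
    (componentsIn (cthickening ε (sierpinski ρ))).encard = 3 ^ (k + 1) := by
  have step : ∀ {k ε}, ρ ^ (k + 1) * (1 / 2 - ρ) ≤ ε → ε < ρ ^ k * (1 / 2 - ρ) →
      (componentsIn (cthickening ε (sierpinski ρ))).encard =
        3 * (componentsIn (cthickening (ε / ρ) (sierpinski ρ))).encard := fun hε1 hε2 ↦
    encard_componentsIn_cthickening_sierpinski_eq_three_mul hρ0
      ((mul_pos (pow_pos hρ0 _) (by linarith)).trans_le hε1).le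
      (hε2.trans_le (mul_le_of_le_one_left (by linarith) (pow_le_one₀ hρ0.le (by linarith))))
  induction k generalizing ε with
  | zero =>
    have hY := isPreconnected_cthickening_sierpinski hρ0 hρ
      (by rw [le_div_iff₀ hρ0]; linarith : 1 / 2 - ρ ≤ ε / ρ)
    rw [step hε1 hε2, hY.componentsIn_eq
      ⟨v0, self_subset_cthickening _ (vertex_mem_sierpinski (by simp))⟩, encard_singleton]
    norm_num
  | succ k ih =>
    rw [step hε1 hε2, ih (by rwa [le_div_iff₀ hρ0, mul_right_comm, ← pow_succ])
      (by rwa [div_lt_iff₀ hρ0, mul_right_comm, ← pow_succ]), pow_succ 3 (k + 1), mul_comm]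

end Sierpinski

/-- Assume moreover `ρ < 1/2`.  For every natural number `k`, if
`ρ^{k+1}·(1/2 − ρ) ≤ ε < ρ^k·(1/2 − ρ)`, then the closed `ε`-neighborhood `S_ε`
has exactly `3^{k+1}` connected components. -/
theorem sierpinski_cthickening_component_count
    (ρ : ℝ) (hρ0 : 0 < ρ) (hρ : ρ < 1 / 2) (k : ℕ) (ε : ℝ)
    (hε1 : ρ ^ (k + 1) * (1 / 2 - ρ) ≤ ε) (hε2 : ε < ρ ^ k * (1 / 2 - ρ)) :
    {C : Set (EuclideanSpace ℝ (Fin 2)) |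
        ∃ p ∈ Metric.cthickening ε (sierpinski ρ),
          C = connectedComponentIn (Metric.cthickening ε (sierpinski ρ)) p}.ncard
      = 3 ^ (k + 1) := by
  have hcomp : {C | ∃ p ∈ cthickening ε (sierpinski ρ),
      C = connectedComponentIn (cthickening ε (sierpinski ρ)) p} =
        componentsIn (cthickening ε (sierpinski ρ)) := by
    ext C
    simp [componentsIn, eq_comm]
  rw [hcomp, ncard_def, encard_componentsIn_cthickening_sierpinski hρ0 hρ k hε1 hε2]
  rfl
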